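/- arXiv:1105.1623 — 2 statements merged into one kernel-verified Lean document; each statement's English description precedes it below -/
import Mathlib

section
/- Let V be an inner product space over the complex numbers, let v₁, …, v_n be finitely many vectors in V, and let Φ ∈ V. Then ∑_{i=1}^{n} |⟨Φ, v_i⟩|² ≤ ‖Φ‖² · max_{1 ≤ i ≤ n} ∑_{j=1}^{n} |⟨v_i, v_j⟩|. -/
/-!
Put `w = ∑ᵢ ⟨vᵢ, Φ⟩ vᵢ`, so that `⟨Φ, w⟩ = ∑ᵢ |⟨Φ, vᵢ⟩|² =: S`. Cauchy–Schwarz gives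
`S² ≤ ‖Φ‖² ‖w‖²`, and expanding `‖w‖²` and applying `|cᵢ cⱼ| ≤ (|cᵢ|² + |cⱼ|²)/2` together with
the symmetry of `|⟨vᵢ, vⱼ⟩|` bounds `‖w‖² ≤ S · maxᵢ ∑ⱼ |⟨vᵢ, vⱼ⟩|`. Dividing by `S` gives the claim.
-/

open Finset RCLike
open scoped InnerProductSpace

section SchurTest

variable {ι : Type*} [Fintype ι]

theorem sum_sum_mul_mul_le_of_sum_le {b : ι → ι → ℝ} {M : ℝ} (hb_nonneg : ∀ i j, 0 ≤ b i j)
    (hb_symm : ∀ i j, b i j = b j i) (hrow : ∀ i, ∑ j, b i j ≤ M) (x : ι → ℝ) :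
    ∑ i, ∑ j, x i * x j * b i j ≤ M * ∑ i, x i ^ 2 := by
  have hswap : ∑ i, ∑ j, x j ^ 2 * b i j = ∑ i, ∑ j, x i ^ 2 * b i j := by
    rw [Finset.sum_comm]
    simp only [hb_symm]
  calc ∑ i, ∑ j, x i * x j * b i j
      ≤ ∑ i, ∑ j, (x i ^ 2 * b i j + x j ^ 2 * b i j) / 2 := by
        gcongr with i _ j _
        nlinarith [sq_nonneg (x i - x j), hb_nonneg i j]
    _ = ∑ i, x i ^ 2 * ∑ j, b i j := by
        simp only [add_div, Finset.sum_add_distrib, ← Finset.sum_div, hswap, Finset.mul_sum]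
        ring
    _ ≤ ∑ i, x i ^ 2 * M := by gcongr with i _; exact hrow i
    _ = M * ∑ i, x i ^ 2 := by rw [← Finset.sum_mul, mul_comm]

end SchurTest

section InnerProductSpace

variable {𝕜 E ι : Type*} [RCLike 𝕜] [NormedAddCommGroup E] [InnerProductSpace 𝕜 E] [Fintype ι]

theorem norm_sum_smul_sq_le (c : ι → 𝕜) (v : ι → E) :
    ‖∑ i, c i • v i‖ ^ 2 ≤ ∑ i, ∑ j, ‖c i‖ * ‖c j‖ * ‖⟪v i, v j⟫_𝕜‖ := by
  rw [← inner_self_eq_norm_sq (𝕜 := 𝕜) (∑ i, c i • v i)]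
  refine (re_le_norm _).trans ?_
  simp_rw [sum_inner, inner_sum, inner_smul_left, inner_smul_right]
  refine (norm_sum_le _ _).trans (Finset.sum_le_sum fun i _ => (norm_sum_le _ _).trans_eq ?_)
  simp only [norm_mul, norm_conj, mul_assoc]

theorem norm_sum_smul_sq_le_of_sum_norm_inner_le {v : ι → E} {M : ℝ}
    (hrow : ∀ i, ∑ j, ‖⟪v i, v j⟫_𝕜‖ ≤ M) (c : ι → 𝕜) :
    ‖∑ i, c i • v i‖ ^ 2 ≤ M * ∑ i, ‖c i‖ ^ 2 :=
  (norm_sum_smul_sq_le c v).trans <|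
    sum_sum_mul_mul_le_of_sum_le (fun _ _ => norm_nonneg _) (fun _ _ => norm_inner_symm _ _) hrow _

/-- The duality principle: a bound on the synthesis operator `c ↦ ∑ cᵢ vᵢ` gives the same bound
on the analysis operator `Φ ↦ (⟨Φ, vᵢ⟩)ᵢ`. -/
theorem sum_norm_inner_sq_le_of_norm_sum_smul_sq_le {v : ι → E} {K : ℝ} (hK : 0 ≤ K)
    (h : ∀ c : ι → 𝕜, ‖∑ i, c i • v i‖ ^ 2 ≤ K * ∑ i, ‖c i‖ ^ 2) (Φ : E) :
    ∑ i, ‖⟪Φ, v i⟫_𝕜‖ ^ 2 ≤ K * ‖Φ‖ ^ 2 := by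
  set S := ∑ i, ‖⟪Φ, v i⟫_𝕜‖ ^ 2
  set w := ∑ i, ⟪v i, Φ⟫_𝕜 • v i
  have hS : 0 ≤ S := by positivity
  have hinner : ⟪Φ, w⟫_𝕜 = S := by
    simp only [w, S, inner_sum, inner_smul_right]
    push_cast
    refine Finset.sum_congr rfl fun i _ => ?_
    rw [← inner_conj_symm (v i) Φ, RCLike.conj_mul]
  have hw : ‖w‖ ^ 2 ≤ K * S := by simpa only [norm_inner_symm] using h fun i => ⟪v i, Φ⟫_𝕜
  have hS_sq : S ^ 2 ≤ ‖Φ‖ ^ 2 * (K * S) :=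
    calc S ^ 2 = ‖⟪Φ, w⟫_𝕜‖ ^ 2 := by rw [hinner, norm_ofReal, abs_of_nonneg hS]
      _ ≤ (‖Φ‖ * ‖w‖) ^ 2 := by gcongr; exact norm_inner_le_norm Φ w
      _ = ‖Φ‖ ^ 2 * ‖w‖ ^ 2 := mul_pow _ _ _
      _ ≤ ‖Φ‖ ^ 2 * (K * S) := by gcongr
  rcases hS.eq_or_lt with hS0 | hSpos
  · rw [← hS0]; positivity
  · nlinarith

end InnerProductSpace

theorem bombieri_inequality_general {V : Type*} [NormedAddCommGroup V] [InnerProductSpace ℂ V]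
    (n : ℕ) (v : Fin n → V) (Φ : V) :
    ∑ i : Fin n, ‖(inner ℂ Φ (v i) : ℂ)‖ ^ 2
      ≤ ‖Φ‖ ^ 2 * ⨆ i : Fin n, ∑ j : Fin n, ‖(inner ℂ (v i) (v j) : ℂ)‖ := by
  set M := ⨆ i : Fin n, ∑ j : Fin n, ‖(inner ℂ (v i) (v j) : ℂ)‖
  have hrow : ∀ i, ∑ j, ‖(inner ℂ (v i) (v j) : ℂ)‖ ≤ M :=
    le_ciSup (Set.finite_range _).bddAbove
  have hM : 0 ≤ M := Real.iSup_nonneg fun i => by positivity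
  rw [mul_comm]
  exact sum_norm_inner_sq_le_of_norm_sum_smul_sq_le hM
    (norm_sum_smul_sq_le_of_sum_norm_inner_le hrow) Φ

/-- **Bombieri's sieve inequality (Lemma 1).** For vectors `v₁, …, vₙ` and `Φ` in a complex
inner product space, `∑ᵢ |⟨Φ, vᵢ⟩|² ≤ ‖Φ‖² · maxᵢ ∑ⱼ |⟨vᵢ, vⱼ⟩|`. The maximum over
`1 ≤ i ≤ n` is expressed as a supremum over `Fin n`. -/
theorem bombieri_inequality {V : Type*} [NormedAddCommGroup V] [InnerProductSpace ℂ V]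
    (n : ℕ) (hn : 0 < n) (v : Fin n → V) (Φ : V) :
    ∑ i : Fin n, ‖(inner ℂ Φ (v i) : ℂ)‖ ^ 2
      ≤ ‖Φ‖ ^ 2 * ⨆ i : Fin n, ∑ j : Fin n, ‖(inner ℂ (v i) (v j) : ℂ)‖ :=
  bombieri_inequality_general n v Φ
end

section
/- Let R and N be integers with 2 ≤ R and R² < N. Then there is a function g : ℕ → ℝ with the following properties: g(1) = 1; |g(n)| ≤ 1 for all n ≤ R; g(n) = 0 for all n > R; and ∑_{n ≤ N} ( ∑_{d | n} g(d) )² ≤ N/log R + R². -/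
open Finset ArithmeticFunction
open scoped ArithmeticFunction.Moebius ArithmeticFunction.sigma Nat

open UniqueFactorizationMonoid (radical radical_dvd_self squarefree_radical)

/-!
Selberg's Λ²-weights. Put `L = ∑_{f ≤ R} μ²(f)/φ(f)` and
`g(d) = d ∑_{d ∣ e ≤ R} μ(e/d) y_e` with `y_e = μ(e)/(φ(e) L)`.

Expanding the square and counting multiples of `[d, e]` up to `N` gives
`∑_{n ≤ N} (1 ∗ g)(n)² = ∑_{d, e ≤ R} g(d) g(e) ⌊N/[d, e]⌋ ≤ N Q + R²` with
`Q = ∑_{d, e ≤ R} g(d) g(e)/[d, e]`, as soon as `|g| ≤ 1`. Since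
`1/[d, e] = (d, e)/(d e) = (1/(d e)) ∑_{f ∣ (d, e)} φ(f)`, the quadratic form diagonalises as
`Q = ∑_f φ(f) (∑_{f ∣ d} g(d)/d)²`, and Möbius inversion over multiples turns the inner sums
back into `y_f`; so `Q = ∑_f μ²(f)/(φ(f) L²) = 1/L`. (This `y` minimises `Q` subject to
`g(1) = ∑_f μ(f) y_f = 1`.)

Reindexing `e = d k` gives `g(d) = μ(d) (d/φ(d)) L_d(R/d) / L`, where `L_d` only counts `k`
coprime to `d`. For squarefree `d`, `d/φ(d) = ∑_{t ∣ d} μ²(t)/φ(t)`, and `(t, k) ↦ t k` is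
injective into `[1, R]`, so `|g(d)| ≤ 1`. Finally `L ≥ ∑_{k ≤ R} 1/k ≥ log R`: grouping `k` by
its radical `f`, the `k` with radical `f` are among the `f m` with `m ∣ f^R`, and
`∑_{m ∣ f^R} 1/(f m) = σ(f^R)/f^(R+1) ≤ 1/φ(f)`.
-/

namespace SelbergSieveWeights

lemma abs_natCast_div_sub_div_le_one (m n : ℕ) : |((m / n : ℕ) : ℝ) - m / n| ≤ 1 := by
  have upper : ((m / n : ℕ) : ℝ) ≤ m / n := Nat.cast_div_le
  have lower : (m : ℝ) / n - 1 < (m / n : ℕ) := by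
    rw [← Nat.floor_div_eq_div (K := ℝ)]
    exact Nat.sub_one_lt_floor _
  rw [abs_le]
  constructor <;> linarith

lemma filter_dvd_Icc_eq_divisors {R e : ℕ} (he : e ∈ Icc 1 R) :
    {d ∈ Icc 1 R | d ∣ e} = e.divisors := by
  simp only [mem_Icc] at he
  ext d
  simp only [mem_filter, mem_Icc, Nat.mem_divisors]
  constructor
  · rintro ⟨-, hde⟩
    exact ⟨hde, by omega⟩
  · rintro ⟨hde, -⟩
    exact ⟨⟨Nat.pos_of_dvd_of_pos hde (by omega), (Nat.le_of_dvd (by omega) hde).trans he.2⟩, hde⟩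

lemma sum_filter_dvd_Icc_eq_sum_mul {M : Type*} [AddCommMonoid M] {R d : ℕ} (hd : 0 < d)
    (F : ℕ → M) :
    ∑ e ∈ Icc 1 R with d ∣ e, F e = ∑ k ∈ Icc 1 (R / d), F (d * k) := by
  have hmultiples : {e ∈ Icc 1 R | d ∣ e} = (Icc 1 (R / d)).image (d * ·) := by
    ext e
    simp only [mem_filter, mem_Icc, mem_image, Nat.le_div_iff_mul_le hd]
    constructor
    · rintro ⟨⟨he1, heR⟩, k, rfl⟩
      exact ⟨k, ⟨Nat.pos_of_mul_pos_left he1, by rwa [mul_comm]⟩, rfl⟩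
    · rintro ⟨k, ⟨hk1, hkR⟩, rfl⟩
      exact ⟨⟨Nat.mul_pos hd hk1, by rwa [mul_comm]⟩, dvd_mul_right d k⟩
  rw [hmultiples, sum_image fun a _ b _ h => Nat.eq_of_mul_eq_mul_left hd h]

lemma sum_divisors_eq_sum_Icc_ite {M : Type*} [AddCommMonoid M] {R n : ℕ} {g : ℕ → M}
    (hg : ∀ d, R < d → g d = 0) (hn : n ≠ 0) :
    ∑ d ∈ n.divisors, g d = ∑ d ∈ Icc 1 R, if d ∣ n then g d else 0 := by
  rw [← sum_filter]
  refine (sum_subset (fun d hd => ?_) fun d hd hdR => ?_).symm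
  · simp only [mem_filter, mem_Icc] at hd
    exact Nat.mem_divisors.mpr ⟨hd.2, hn⟩
  · refine hg d (not_le.mp fun hle => hdR ?_)
    have hdn := Nat.dvd_of_mem_divisors hd
    exact mem_filter.mpr ⟨mem_Icc.mpr ⟨Nat.pos_of_mem_divisors hd, hle⟩, hdn⟩

lemma sum_divisors_moebius (n : ℕ) : ∑ d ∈ n.divisors, μ d = if n = 1 then 1 else 0 := by
  rw [← coe_mul_zeta_apply, moebius_mul_coe_zeta, one_apply]

lemma sum_divisors_filter_dvd_moebius_div {f e : ℕ} (hfe : f ∣ e) (he : e ≠ 0) :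
    ∑ d ∈ e.divisors with f ∣ d, μ (e / d) = if e = f then 1 else 0 := by
  have hf : f ≠ 0 := ne_zero_of_dvd_ne_zero he hfe
  have hcodiv : ∀ c ∈ e.divisors, (f ∣ e / c ↔ c ∣ e / f) := fun c hc => by
    have hc' := Nat.dvd_of_mem_divisors hc
    rw [Nat.dvd_div_iff_mul_dvd hc', Nat.dvd_div_iff_mul_dvd hfe, mul_comm]
  calc ∑ d ∈ e.divisors with f ∣ d, μ (e / d)
      = ∑ c ∈ e.divisors with c ∣ e / f, μ c := by
        rw [sum_filter, sum_filter, ← Nat.sum_div_divisors]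
        refine sum_congr rfl fun c hc => ?_
        rw [Nat.div_div_self (Nat.dvd_of_mem_divisors hc) he]
        exact if_congr (hcodiv c hc) rfl rfl
    _ = if e = f then 1 else 0 := by
        rw [Nat.divisors_filter_dvd_of_dvd he (Nat.div_dvd_of_dvd hfe), sum_divisors_moebius]
        simp only [Nat.div_eq_iff_eq_mul_left (Nat.pos_of_ne_zero hf) hfe, one_mul]

lemma sum_filter_dvd_sum_moebius_mul {A : Type*} [Ring A] {R f : ℕ} (u : ℕ → A)
    (hf : f ∈ Icc 1 R) :
    ∑ d ∈ Icc 1 R with f ∣ d, ∑ e ∈ Icc 1 R with d ∣ e, (μ (e / d) : A) * u e = u f := by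
  have swap : ∀ d e, d ∈ {d ∈ Icc 1 R | f ∣ d} ∧ e ∈ {e ∈ Icc 1 R | d ∣ e} ↔
      d ∈ {d ∈ e.divisors | f ∣ d} ∧ e ∈ {e ∈ Icc 1 R | f ∣ e} := fun d e => by
    simp only [mem_filter, mem_Icc, Nat.mem_divisors]
    constructor
    · rintro ⟨⟨-, hfd⟩, ⟨he1, heR⟩, hde⟩
      exact ⟨⟨⟨hde, by omega⟩, hfd⟩, ⟨he1, heR⟩, hfd.trans hde⟩
    · rintro ⟨⟨⟨hde, -⟩, hfd⟩, ⟨he1, heR⟩, -⟩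
      exact ⟨⟨⟨Nat.pos_of_dvd_of_pos hde he1, (Nat.le_of_dvd he1 hde).trans heR⟩, hfd⟩,
        ⟨he1, heR⟩, hde⟩
  rw [sum_comm' swap]
  calc ∑ e ∈ Icc 1 R with f ∣ e, ∑ d ∈ e.divisors with f ∣ d, (μ (e / d) : A) * u e
      = ∑ e ∈ Icc 1 R with f ∣ e, if e = f then u e else 0 := by
        refine sum_congr rfl fun e he => ?_
        simp only [mem_filter, mem_Icc] at he
        have hμ : ∑ d ∈ e.divisors with f ∣ d, (μ (e / d) : A) = if e = f then 1 else 0 := by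
          rw [← Int.cast_sum, sum_divisors_filter_dvd_moebius_div he.2 (by omega)]
          split_ifs <;> simp
        rw [← sum_mul, hμ, ite_mul, one_mul, zero_mul]
    _ = u f := by rw [sum_ite_eq', if_pos (mem_filter.mpr ⟨hf, dvd_rfl⟩)]

lemma gcd_eq_sum_totient {R d : ℕ} (e : ℕ) (hd : d ∈ Icc 1 R) :
    d.gcd e = ∑ f ∈ Icc 1 R with f ∣ d ∧ f ∣ e, φ f := by
  simp only [mem_Icc] at hd
  have hgcd : d.gcd e ∈ Icc 1 R := mem_Icc.mpr
    ⟨Nat.gcd_pos_of_pos_left e (by omega), (Nat.gcd_le_left e (by omega)).trans hd.2⟩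
  simp_rw [← Nat.dvd_gcd_iff, filter_dvd_Icc_eq_divisors hgcd]
  exact (Nat.sum_totient _).symm

lemma sum_sum_mul_div_lcm {K : Type*} [Field K] [CharZero K] (w : ℕ → K) (R : ℕ) :
    ∑ d ∈ Icc 1 R, ∑ e ∈ Icc 1 R, w d * w e / (d.lcm e : K) =
      ∑ f ∈ Icc 1 R, φ f * (∑ d ∈ Icc 1 R with f ∣ d, w d / d) ^ 2 := by
  have term : ∀ d ∈ Icc 1 R, ∀ e ∈ Icc 1 R, w d * w e / (d.lcm e : K) =
      ∑ f ∈ Icc 1 R, φ f * ((if f ∣ d then w d / d else 0) * (if f ∣ e then w e / e else 0)) :=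
    fun d hd e he => by
      simp only [mem_Icc] at hd he
      have hgl : (d.gcd e : K) * d.lcm e = d * e := by exact_mod_cast Nat.gcd_mul_lcm d e
      have hl0 : (d.lcm e : K) ≠ 0 := Nat.cast_ne_zero.mpr (Nat.lcm_ne_zero (by omega) (by omega))
      have hg0 : (d.gcd e : K) ≠ 0 := Nat.cast_ne_zero.mpr (Nat.gcd_pos_of_pos_left e hd.1).ne'
      simp only [mul_ite, ite_mul, mul_zero, zero_mul, ← ite_and, and_comm (a := _ ∣ e)]
      rw [← sum_filter, ← sum_mul, ← Nat.cast_sum, ← gcd_eq_sum_totient e (mem_Icc.mpr hd),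
        div_mul_div_comm, ← hgl]
      field_simp
  calc ∑ d ∈ Icc 1 R, ∑ e ∈ Icc 1 R, w d * w e / (d.lcm e : K)
      = ∑ d ∈ Icc 1 R, ∑ f ∈ Icc 1 R, ∑ e ∈ Icc 1 R,
          φ f * ((if f ∣ d then w d / d else 0) * (if f ∣ e then w e / e else 0)) := by
        refine sum_congr rfl fun d hd => ?_
        rw [sum_comm]
        exact sum_congr rfl fun e he => term d hd e he
    _ = ∑ f ∈ Icc 1 R, φ f * (∑ d ∈ Icc 1 R with f ∣ d, w d / d) ^ 2 := by
        rw [sum_comm]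
        simp only [sq, sum_filter, sum_mul_sum]
        simp only [mul_sum]

lemma sum_sq_sum_divisors_eq {A : Type*} [CommSemiring A] {R : ℕ} {g : ℕ → A}
    (hg : ∀ d, R < d → g d = 0) (N : ℕ) :
    ∑ n ∈ Icc 1 N, (∑ d ∈ n.divisors, g d) ^ 2 =
      ∑ d ∈ Icc 1 R, ∑ e ∈ Icc 1 R, g d * g e * (N / d.lcm e : ℕ) := by
  calc ∑ n ∈ Icc 1 N, (∑ d ∈ n.divisors, g d) ^ 2
      = ∑ n ∈ Icc 1 N, ∑ d ∈ Icc 1 R, ∑ e ∈ Icc 1 R,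
          if d.lcm e ∣ n then g d * g e else 0 := by
        refine sum_congr rfl fun n hn => ?_
        rw [sum_divisors_eq_sum_Icc_ite hg (by simp at hn; omega), sq, sum_mul_sum]
        simp only [ite_mul, mul_ite, mul_zero, zero_mul, ← ite_and, Nat.lcm_dvd_iff, and_comm]
    _ = ∑ d ∈ Icc 1 R, ∑ e ∈ Icc 1 R, ∑ n ∈ Icc 1 N, if d.lcm e ∣ n then g d * g e else 0 := by
        rw [sum_comm]
        exact sum_congr rfl fun d _ => sum_comm
    _ = ∑ d ∈ Icc 1 R, ∑ e ∈ Icc 1 R, g d * g e * (N / d.lcm e : ℕ) := by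
        refine sum_congr rfl fun d _ => sum_congr rfl fun e _ => ?_
        rw [← sum_filter, sum_const, nsmul_eq_mul,
          show Icc 1 N = Ioc 0 N from Icc_add_one_left_eq_Ioc 0 N, Nat.Ioc_filter_dvd_card_eq_div]
        ring

lemma sum_sq_sum_divisors_le {R : ℕ} {g : ℕ → ℝ} (hg : ∀ d, R < d → g d = 0)
    (hg1 : ∀ d ∈ Icc 1 R, |g d| ≤ 1) (N : ℕ) :
    ∑ n ∈ Icc 1 N, (∑ d ∈ n.divisors, g d) ^ 2 ≤
      N * ∑ d ∈ Icc 1 R, ∑ e ∈ Icc 1 R, g d * g e / (d.lcm e : ℝ) + (R : ℝ) ^ 2 := by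
  have term : ∀ d ∈ Icc 1 R, ∀ e ∈ Icc 1 R,
      g d * g e * (N / d.lcm e : ℕ) ≤ N * (g d * g e / (d.lcm e : ℝ)) + 1 := fun d hd e he => by
    have hgg : |g d * g e| ≤ 1 := by
      rw [abs_mul]
      exact mul_le_one₀ (hg1 d hd) (abs_nonneg _) (hg1 e he)
    calc g d * g e * (N / d.lcm e : ℕ)
        = N * (g d * g e / (d.lcm e : ℝ)) +
            g d * g e * ((N / d.lcm e : ℕ) - N / (d.lcm e : ℝ)) := by
          ring
      _ ≤ N * (g d * g e / (d.lcm e : ℝ)) + 1 := by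
          grw [le_abs_self (g d * g e * _), abs_mul, hgg, abs_natCast_div_sub_div_le_one, one_mul]
  calc ∑ n ∈ Icc 1 N, (∑ d ∈ n.divisors, g d) ^ 2
      ≤ ∑ d ∈ Icc 1 R, ∑ e ∈ Icc 1 R, (N * (g d * g e / (d.lcm e : ℝ)) + 1) := by
        rw [sum_sq_sum_divisors_eq hg]
        exact sum_le_sum fun d hd => sum_le_sum fun e he => term d hd e he
    _ = N * ∑ d ∈ Icc 1 R, ∑ e ∈ Icc 1 R, g d * g e / (d.lcm e : ℝ) + (R : ℝ) ^ 2 := by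
        simp [sum_add_distrib, mul_sum, sq]

lemma sigma_one_pow_mul_totient_le {f : ℕ} (hf : Squarefree f) (K : ℕ) :
    σ 1 (f ^ K) * φ f ≤ f ^ (K + 1) := by
  rcases K.eq_zero_or_pos with rfl | hK
  · simpa using Nat.totient_le f
  have hf0 : f ≠ 0 := hf.ne_zero
  have hprod : ∏ p ∈ f.primeFactors, p = f := Nat.prod_primeFactors_of_squarefree hf
  have hσ : σ 1 (f ^ K) = ∏ p ∈ f.primeFactors, ∑ k ∈ range (K + 1), p ^ k := by
    rw [sigma_one_apply, Nat.sum_divisors (pow_ne_zero K hf0), Nat.primeFactors_pow f hK.ne']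
    refine prod_congr rfl fun p hp => ?_
    rw [Nat.factorization_pow, Finsupp.smul_apply, smul_eq_mul,
      Nat.factorization_eq_one_of_squarefree hf (Nat.prime_of_mem_primeFactors hp)
        (Nat.dvd_of_mem_primeFactors hp), mul_one]
  have hφ : φ f = ∏ p ∈ f.primeFactors, (p - 1) := by
    have h := Nat.totient_mul_prod_primeFactors f
    rw [hprod, mul_comm f] at h
    exact Nat.eq_of_mul_eq_mul_right (Nat.pos_of_ne_zero hf0) h
  calc σ 1 (f ^ K) * φ f = ∏ p ∈ f.primeFactors, (∑ k ∈ range (K + 1), p ^ k) * (p - 1) := by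
        rw [hσ, hφ, prod_mul_distrib]
    _ ≤ ∏ p ∈ f.primeFactors, p ^ (K + 1) := by
        refine prod_le_prod' fun p hp => ?_
        rw [geom_sum_mul_of_one_le (Nat.prime_of_mem_primeFactors hp).one_le]
        exact Nat.sub_le _ _
    _ = f ^ (K + 1) := by rw [prod_pow, hprod]

lemma sum_divisors_inv {n : ℕ} (hn : n ≠ 0) : ∑ m ∈ n.divisors, (m : ℝ)⁻¹ = σ 1 n / n := by
  rw [sigma_one_apply, Nat.cast_sum, sum_div, ← Nat.sum_div_divisors]
  refine sum_congr rfl fun m hm => ?_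
  have hm0 : (m : ℝ) ≠ 0 := Nat.cast_ne_zero.mpr (Nat.pos_of_mem_divisors hm).ne'
  rw [Nat.cast_div (Nat.dvd_of_mem_divisors hm) hm0]
  field_simp

lemma sum_inv_of_radical_eq_le_inv_totient {R f : ℕ} (hf : Squarefree f) :
    ∑ k ∈ Icc 1 R with radical k = f, (k : ℝ)⁻¹ ≤ (φ f : ℝ)⁻¹ := by
  have hf0 : 0 < f := Nat.pos_of_ne_zero hf.ne_zero
  have hfiber : {k ∈ Icc 1 R | radical k = f} ⊆ (f ^ R).divisors.image (f * ·) := fun k hk => by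
    simp only [mem_filter, mem_Icc] at hk
    obtain ⟨⟨hk1, hkR⟩, rfl⟩ := hk
    have hfk : radical k ∣ k := radical_dvd_self
    have hkf : k ∣ radical k ^ R :=
      (Nat.dvd_radical_pow_self (by omega)).trans (pow_dvd_pow _ hkR)
    exact mem_image.mpr ⟨k / radical k, Nat.mem_divisors.mpr
      ⟨(Nat.div_dvd_of_dvd hfk).trans hkf, pow_ne_zero _ hf0.ne'⟩, Nat.mul_div_cancel' hfk⟩
  have hσ : (σ 1 (f ^ R) : ℝ) * φ f ≤ f ^ (R + 1) := by
    exact_mod_cast sigma_one_pow_mul_totient_le hf R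
  have hφ : (0 : ℝ) < φ f := by exact_mod_cast Nat.totient_pos.mpr hf0
  calc ∑ k ∈ Icc 1 R with radical k = f, (k : ℝ)⁻¹
      ≤ ∑ k ∈ (f ^ R).divisors.image (f * ·), (k : ℝ)⁻¹ :=
        sum_le_sum_of_subset_of_nonneg hfiber fun _ _ _ => by positivity
    _ = (f : ℝ)⁻¹ * ∑ m ∈ (f ^ R).divisors, (m : ℝ)⁻¹ := by
        rw [sum_image fun a _ b _ h => Nat.eq_of_mul_eq_mul_left hf0 h, mul_sum]
        simp only [Nat.cast_mul, mul_inv]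
    _ = σ 1 (f ^ R) / f ^ (R + 1) := by
        rw [sum_divisors_inv (pow_ne_zero _ hf0.ne'), pow_succ]
        push_cast
        ring
    _ ≤ (φ f : ℝ)⁻¹ := by
        rw [div_le_iff₀ (by positivity), ← div_eq_inv_mul, le_div_iff₀ hφ]
        exact hσ

noncomputable def moebiusSqDivTotient (n : ℕ) : ℝ := (μ n : ℝ) ^ 2 / φ n

lemma moebiusSqDivTotient_nonneg (n : ℕ) : 0 ≤ moebiusSqDivTotient n := by
  unfold moebiusSqDivTotient
  positivity

lemma moebiusSqDivTotient_of_squarefree {n : ℕ} (hn : Squarefree n) :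
    moebiusSqDivTotient n = (φ n : ℝ)⁻¹ := by
  rw [moebiusSqDivTotient, ← Int.cast_pow, moebius_sq_eq_one_of_squarefree hn, Int.cast_one,
    one_div]

lemma moebiusSqDivTotient_mul {m n : ℕ} (h : m.Coprime n) :
    moebiusSqDivTotient (m * n) = moebiusSqDivTotient m * moebiusSqDivTotient n := by
  simp only [moebiusSqDivTotient, isMultiplicative_moebius.map_mul_of_coprime h,
    Nat.totient_mul h]
  push_cast
  rw [mul_pow, mul_div_mul_comm]

lemma totient_mul_sum_divisors_moebiusSqDivTotient {d : ℕ} (hd : Squarefree d) :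
    (φ d : ℝ) * ∑ t ∈ d.divisors, moebiusSqDivTotient t = d := by
  have hterm : ∀ t ∈ d.divisors, (φ d : ℝ) * moebiusSqDivTotient t = φ (d / t) := fun t ht => by
    have hsplit : t * (d / t) = d := Nat.mul_div_cancel' (Nat.dvd_of_mem_divisors ht)
    have hcop : t.Coprime (d / t) := Nat.coprime_of_squarefree_mul (by rwa [hsplit])
    have hφt : (φ t : ℝ) ≠ 0 := Nat.cast_ne_zero.mpr (Nat.totient_pos.mpr
      (Nat.pos_of_mem_divisors ht)).ne'
    rw [moebiusSqDivTotient_of_squarefree (hd.squarefree_of_dvd (Nat.dvd_of_mem_divisors ht)),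
      ← hsplit, Nat.totient_mul hcop, hsplit, Nat.cast_mul]
    field_simp
  rw [mul_sum, sum_congr rfl hterm, Nat.sum_div_divisors d (fun t => (φ t : ℝ))]
  exact_mod_cast Nat.sum_totient d

noncomputable def selbergSum (R : ℕ) : ℝ := ∑ f ∈ Icc 1 R, moebiusSqDivTotient f

lemma selbergSum_pos {R : ℕ} (hR : 1 ≤ R) : 0 < selbergSum R :=
  calc (0 : ℝ) < moebiusSqDivTotient 1 := by simp [moebiusSqDivTotient]
    _ ≤ selbergSum R := single_le_sum (fun f _ => moebiusSqDivTotient_nonneg f)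
        (mem_Icc.mpr ⟨le_rfl, hR⟩)

lemma sum_divisors_mul_sum_coprime_le_selbergSum (R d : ℕ) :
    (∑ t ∈ d.divisors, moebiusSqDivTotient t) *
        ∑ k ∈ Icc 1 (R / d) with k.Coprime d, moebiusSqDivTotient k ≤ selbergSum R := by
  set P := d.divisors ×ˢ {k ∈ Icc 1 (R / d) | k.Coprime d}
  have hP : ∀ p ∈ P, p.1 ∣ d ∧ d ≠ 0 ∧ 1 ≤ p.2 ∧ p.2 ≤ R / d ∧ p.2.Coprime d := fun p hp => by
    simp only [P, mem_product, Nat.mem_divisors, mem_filter, mem_Icc] at hp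
    exact ⟨hp.1.1, hp.1.2, hp.2.1.1, hp.2.1.2, hp.2.2⟩
  have hfst : ∀ p ∈ P, (p.1 * p.2).gcd d = p.1 := fun p hp => by
    obtain ⟨htd, -, -, -, hk⟩ := hP p hp
    rw [Nat.Coprime.gcd_mul_right_cancel _ hk, Nat.gcd_eq_left htd]
  have hinj : Set.InjOn (fun p : ℕ × ℕ => p.1 * p.2) P := fun p hp q hq (h : p.1 * p.2 = _) => by
    have h1 : p.1 = q.1 := by rw [← hfst p hp, ← hfst q hq, h]
    have hp0 : 0 < p.1 := Nat.pos_of_dvd_of_pos (hP p hp).1 (Nat.pos_of_ne_zero (hP p hp).2.1)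
    rw [h1] at h hp0
    exact Prod.ext h1 (Nat.eq_of_mul_eq_mul_left hp0 h)
  have hsub : P.image (fun p => p.1 * p.2) ⊆ Icc 1 R := fun n hn => by
    obtain ⟨p, hp, rfl⟩ := mem_image.mp hn
    obtain ⟨htd, hd0, hk1, hkR, -⟩ := hP p hp
    have ht0 : 0 < p.1 := Nat.pos_of_dvd_of_pos htd (Nat.pos_of_ne_zero hd0)
    exact mem_Icc.mpr ⟨Nat.mul_pos ht0 hk1, (Nat.mul_le_mul (Nat.le_of_dvd
      (Nat.pos_of_ne_zero hd0) htd) hkR).trans (Nat.mul_div_le R d)⟩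
  calc (∑ t ∈ d.divisors, moebiusSqDivTotient t) *
        ∑ k ∈ Icc 1 (R / d) with k.Coprime d, moebiusSqDivTotient k
      = ∑ p ∈ P, moebiusSqDivTotient (p.1 * p.2) := by
        rw [sum_mul_sum, ← sum_product']
        refine sum_congr rfl fun p hp => (moebiusSqDivTotient_mul ?_).symm
        obtain ⟨htd, -, -, -, hk⟩ := hP p hp
        exact (hk.coprime_dvd_right htd).symm
    _ = ∑ n ∈ P.image (fun p => p.1 * p.2), moebiusSqDivTotient n := (sum_image hinj).symm
    _ ≤ selbergSum R :=
        sum_le_sum_of_subset_of_nonneg hsub fun n _ _ => moebiusSqDivTotient_nonneg n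

lemma sum_inv_le_selbergSum (R : ℕ) : ∑ k ∈ Icc 1 R, (k : ℝ)⁻¹ ≤ selbergSum R := by
  have hrad : ∀ k ∈ Icc 1 R, radical k ∈ Icc 1 R := fun k hk => by
    simp only [mem_Icc] at hk ⊢
    exact ⟨Nat.radical_pos k, (Nat.radical_le_self_iff.mpr (by omega)).trans hk.2⟩
  rw [← sum_fiberwise_of_maps_to hrad]
  refine sum_le_sum fun f _ => ?_
  by_cases hf : Squarefree f
  · rw [moebiusSqDivTotient_of_squarefree hf]
    exact sum_inv_of_radical_eq_le_inv_totient hf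
  · have hempty : {k ∈ Icc 1 R | radical k = f} = ∅ :=
      filter_false_of_mem fun k _ hk => hf (hk ▸ squarefree_radical)
    rw [hempty, sum_empty]
    exact moebiusSqDivTotient_nonneg f

lemma log_le_selbergSum (R : ℕ) : Real.log R ≤ selbergSum R := by
  have h := log_le_harmonic_floor (R : ℝ) R.cast_nonneg
  rw [Nat.floor_natCast, harmonic_eq_sum_Icc] at h
  push_cast at h
  exact h.trans (sum_inv_le_selbergSum R)

noncomputable def selbergWeight (R d : ℕ) : ℝ :=
  d * ∑ e ∈ Icc 1 R with d ∣ e, μ (e / d) * (μ e / φ e / selbergSum R)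

lemma sum_selbergWeight_div {R f : ℕ} (hf : f ∈ Icc 1 R) :
    ∑ d ∈ Icc 1 R with f ∣ d, selbergWeight R d / d = μ f / φ f / selbergSum R := by
  rw [← sum_filter_dvd_sum_moebius_mul (fun e => μ e / φ e / selbergSum R) hf]
  refine sum_congr rfl fun d hd => ?_
  have hd0 : (d : ℝ) ≠ 0 := Nat.cast_ne_zero.mpr (by simp at hd; omega)
  rw [selbergWeight, mul_div_cancel_left₀ _ hd0]

lemma sum_sum_selbergWeight_div_lcm (R : ℕ) :
    ∑ d ∈ Icc 1 R, ∑ e ∈ Icc 1 R, selbergWeight R d * selbergWeight R e / (d.lcm e : ℝ) =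
      (selbergSum R)⁻¹ := by
  have hterm : ∀ f ∈ Icc 1 R,
      (φ f : ℝ) * (∑ d ∈ Icc 1 R with f ∣ d, selbergWeight R d / d) ^ 2 =
        moebiusSqDivTotient f / selbergSum R ^ 2 := fun f hf => by
    have hφ : (φ f : ℝ) ≠ 0 := Nat.cast_ne_zero.mpr (Nat.totient_pos.mpr (by simp at hf; omega)).ne'
    rw [sum_selbergWeight_div hf, moebiusSqDivTotient]
    field_simp
  rw [sum_sum_mul_div_lcm, sum_congr rfl hterm, ← sum_div, ← selbergSum, sq, div_self_mul_self']

lemma selbergWeight_eq {R d : ℕ} (hd : 0 < d) :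
    selbergWeight R d = μ d * (d / φ d) *
      (∑ k ∈ Icc 1 (R / d) with k.Coprime d, moebiusSqDivTotient k) / selbergSum R := by
  have hterm : ∀ k ∈ Icc 1 (R / d), (μ (d * k / d) : ℝ) * (μ (d * k) / φ (d * k) / selbergSum R) =
      if k.Coprime d then μ d / φ d * moebiusSqDivTotient k / selbergSum R else 0 := fun k _ => by
    rw [Nat.mul_div_cancel_left k hd]
    split_ifs with hk
    · rw [isMultiplicative_moebius.map_mul_of_coprime hk.symm, Nat.totient_mul hk.symm,
        moebiusSqDivTotient]
      push_cast
      ring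
    · rw [moebius_eq_zero_of_not_squarefree fun h => hk (Nat.coprime_of_squarefree_mul h).symm]
      simp
  rw [selbergWeight, sum_filter_dvd_Icc_eq_sum_mul hd, sum_congr rfl hterm, ← sum_filter,
    ← sum_div, ← mul_sum]
  ring

lemma selbergWeight_one {R : ℕ} (hR : 1 ≤ R) : selbergWeight R 1 = 1 := by
  have hall : {k ∈ Icc 1 R | k.Coprime 1} = Icc 1 R :=
    filter_true_of_mem fun k _ => Nat.coprime_one_right k
  rw [selbergWeight_eq one_pos, Nat.div_one, hall, ← selbergSum]
  simp [(selbergSum_pos hR).ne']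

lemma selbergWeight_eq_zero_of_lt {R d : ℕ} (h : R < d) : selbergWeight R d = 0 := by
  rw [selbergWeight_eq (by omega), Nat.div_eq_of_lt h]
  simp

lemma abs_selbergWeight_le_one (R d : ℕ) : |selbergWeight R d| ≤ 1 := by
  rcases d.eq_zero_or_pos with rfl | hd
  · simp [selbergWeight]
  by_cases hsq : Squarefree d
  · have hφ : (0 : ℝ) < φ d := by exact_mod_cast Nat.totient_pos.mpr hd
    have hd_div : (d : ℝ) / φ d = ∑ t ∈ d.divisors, moebiusSqDivTotient t := by
      rw [div_eq_iff hφ.ne', mul_comm, totient_mul_sum_divisors_moebiusSqDivTotient hsq]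
    have hμ : |(μ d : ℝ)| = 1 := by exact_mod_cast abs_moebius_eq_one_of_squarefree hsq
    have hL : 0 ≤ selbergSum R := sum_nonneg fun f _ => moebiusSqDivTotient_nonneg f
    rw [selbergWeight_eq hd, abs_div, abs_mul, abs_mul, hμ, one_mul, hd_div, abs_of_nonneg hL,
      abs_of_nonneg (sum_nonneg fun t _ => moebiusSqDivTotient_nonneg t),
      abs_of_nonneg (sum_nonneg fun k _ => moebiusSqDivTotient_nonneg k)]
    exact div_le_one_of_le₀ (sum_divisors_mul_sum_coprime_le_selbergSum R d) hL
  · rw [selbergWeight_eq hd, moebius_eq_zero_of_not_squarefree hsq]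
    simp

end SelbergSieveWeights

open SelbergSieveWeights

theorem selberg_sieve_weights_general (R N : ℕ) (hR : 2 ≤ R) :
    ∃ g : ℕ → ℝ, g 1 = 1 ∧ (∀ n : ℕ, n ≤ R → |g n| ≤ 1) ∧ (∀ n : ℕ, R < n → g n = 0) ∧
      ∑ n ∈ Icc 1 N, (∑ d ∈ n.divisors, g d) ^ 2 ≤ (N : ℝ) / Real.log R + (R : ℝ) ^ 2 := by
  have hlog : 0 < Real.log R := Real.log_pos (by exact_mod_cast hR)
  refine ⟨selbergWeight R, selbergWeight_one (by omega), fun n _ => abs_selbergWeight_le_one R n,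
    fun n => selbergWeight_eq_zero_of_lt, ?_⟩
  calc ∑ n ∈ Icc 1 N, (∑ d ∈ n.divisors, selbergWeight R d) ^ 2
      ≤ N * ∑ d ∈ Icc 1 R, ∑ e ∈ Icc 1 R,
          selbergWeight R d * selbergWeight R e / (d.lcm e : ℝ) + (R : ℝ) ^ 2 :=
        sum_sq_sum_divisors_le (fun d => selbergWeight_eq_zero_of_lt)
          (fun d _ => abs_selbergWeight_le_one R d) N
    _ ≤ N / Real.log R + (R : ℝ) ^ 2 := by
        rw [sum_sum_selbergWeight_div_lcm R, ← div_eq_mul_inv]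
        gcongr
        exact log_le_selbergSum R

/-- **Selberg's sieve (Lemma 2).** For integers `2 ≤ R` with `R² < N` there is a function
`g` with `g(1) = 1`, `|g(n)| ≤ 1` for `n ≤ R`, `g(n) = 0` for `n > R`, and
`∑_{n ≤ N} ((1 ∗ g)(n))² ≤ N / log R + R²`. -/
theorem selberg_sieve_weights (R N : ℕ) (hR : 2 ≤ R) (hRN : R ^ 2 < N) :
    ∃ g : ℕ → ℝ, g 1 = 1 ∧ (∀ n : ℕ, n ≤ R → |g n| ≤ 1) ∧ (∀ n : ℕ, R < n → g n = 0) ∧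
      ∑ n ∈ Icc 1 N, (∑ d ∈ n.divisors, g d) ^ 2 ≤ (N : ℝ) / Real.log R + (R : ℝ) ^ 2 :=
  selberg_sieve_weights_general R N hR
end
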